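/- arXiv:2212.14344 — 2 statements merged into one kernel-verified Lean document; each statement's English description precedes it below -/
import Mathlib

section
/- For the angle discrete gradient G (the coordinate-increment construction ∇̄^ℓ in the three distances r_{ji}, r_{jk}, r_{ik}), one has ⟨G(q,q'), q'−q⟩ = ∑_{u=1}^N ⟨G_u(q,q'), q'_u − q_u⟩ = ψ(r'_{ji}, r'_{jk}, r'_{ik}) − ψ(r_{ji}, r_{jk}, r_{ik}) = V(q') − V(q), for all configurations q, q' with r'_{ji} ≠ r_{ji}, r'_{jk} ≠ r_{jk}, r'_{ik} ≠ r_{ik}. -/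
/-! The identity holds because each distance `r` enters `G` only through the pair term
`Δ · (r⃗' + r⃗)/(r' + r)`, whose pairing with the relative increment `r⃗' − r⃗` is
`Δ · (r'² − r²)/(r' + r) = Δ · (r' − r)`, i.e. the increment of `ψ` in that coordinate;
the three coordinate increments telescope. -/

open scoped Matrix

/-- The Euclidean norm of a vector in `ℝ³`. -/
noncomputable def norm3 (v : Fin 3 → ℝ) : ℝ := Real.sqrt (∑ x, v x ^ 2)

/-- The angle discrete gradient (coordinate-increment construction `∇̄^ℓ` in the three
distances `r_{ji}, r_{jk}, r_{ik}`) associated with the triple `i, j, k` and the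
potential `ψ`, for the angle potential `V(q) = ψ(r_{ji}, r_{jk}, r_{ik})`. -/
noncomputable def angleDG {N : ℕ} (i j k : Fin N) (ψ : ℝ → ℝ → ℝ → ℝ)
    (q q' : Fin N → Fin 3 → ℝ) : Fin N → Fin 3 → ℝ :=
  let rji := norm3 (q i - q j); let rjk := norm3 (q k - q j); let rik := norm3 (q k - q i)
  let rji' := norm3 (q' i - q' j); let rjk' := norm3 (q' k - q' j)
  let rik' := norm3 (q' k - q' i)
  let Dji := (ψ rji' rjk rik - ψ rji rjk rik) / (rji' - rji)
  let Djk := (ψ rji' rjk' rik - ψ rji' rjk rik) / (rjk' - rjk)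
  let Dik := (ψ rji' rjk' rik' - ψ rji' rjk' rik) / (rik' - rik)
  let uji := (rji' + rji)⁻¹ • ((q' i - q' j) + (q i - q j))
  let ujk := (rjk' + rjk)⁻¹ • ((q' k - q' j) + (q k - q j))
  let uik := (rik' + rik)⁻¹ • ((q' k - q' i) + (q k - q i))
  fun u =>
    if u = i then Dji • uji - Dik • uik
    else if u = j then -(Dji • uji) - Djk • ujk
    else if u = k then Djk • ujk + Dik • uik
    else 0

theorem Fintype.sum_eq_add_add {ι M : Type*} [Fintype ι] [AddCommMonoid M] {f : ι → M}
    (a b c : ι) (hab : a ≠ b) (hac : a ≠ c) (hbc : b ≠ c)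
    (hf : ∀ x, x ≠ a → x ≠ b → x ≠ c → f x = 0) :
    ∑ x, f x = f a + f b + f c := by
  classical
  rw [← Finset.sum_subset (Finset.subset_univ {a, b, c}), Finset.sum_insert, Finset.sum_pair hbc,
    add_assoc]
  · simp [hab, hac]
  · intro x _ hx
    simp only [Finset.mem_insert, Finset.mem_singleton, not_or] at hx
    exact hf x hx.1 hx.2.1 hx.2.2

theorem add_dotProduct_sub {n R : Type*} [Fintype n] [CommRing R] (v w : n → R) :
    (v + w) ⬝ᵥ (v - w) = v ⬝ᵥ v - w ⬝ᵥ w := by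
  simp only [add_dotProduct, dotProduct_sub, dotProduct_comm w v]
  ring

theorem dotProduct_triangle_eq_pairs {n R : Type*} [Fintype n] [CommRing R]
    (a b c : R) (wji wjk wik xi xj xk : n → R) :
    (a • wji - c • wik) ⬝ᵥ xi + (-(a • wji) - b • wjk) ⬝ᵥ xj + (b • wjk + c • wik) ⬝ᵥ xk
      = a * (wji ⬝ᵥ (xi - xj)) + b * (wjk ⬝ᵥ (xk - xj)) + c * (wik ⬝ᵥ (xk - xi)) := by
  simp only [sub_dotProduct, add_dotProduct, neg_dotProduct, smul_dotProduct, dotProduct_sub,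
    smul_eq_mul]
  ring

theorem norm3_nonneg (v : Fin 3 → ℝ) : 0 ≤ norm3 v := Real.sqrt_nonneg _

theorem norm3_sq (v : Fin 3 → ℝ) : norm3 v ^ 2 = v ⬝ᵥ v := by
  rw [norm3, Real.sq_sqrt (by positivity)]
  simp only [dotProduct, sq]

theorem secant_dotProduct_sub (v v' : Fin 3 → ℝ) (h : norm3 v' ≠ norm3 v) :
    ((norm3 v' + norm3 v)⁻¹ • (v' + v)) ⬝ᵥ (v' - v) = norm3 v' - norm3 v := by
  have hsum : norm3 v' + norm3 v ≠ 0 := by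
    have := norm3_nonneg v
    have := norm3_nonneg v'
    contrapose! h
    linarith
  rw [smul_dotProduct, add_dotProduct_sub, ← norm3_sq, ← norm3_sq, smul_eq_mul]
  field_simp
  ring

/-- Secant property of the angle discrete gradient:
`⟨G(q,q'), q'−q⟩ = ψ(r'_{ji},r'_{jk},r'_{ik}) − ψ(r_{ji},r_{jk},r_{ik}) = V(q') − V(q)`. -/
theorem angleDG_secant {N : ℕ} (i j k : Fin N)
    (hij : i ≠ j) (hik : i ≠ k) (hjk : j ≠ k)
    (ψ : ℝ → ℝ → ℝ → ℝ) (q q' : Fin N → Fin 3 → ℝ)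
    (h1 : norm3 (q' i - q' j) ≠ norm3 (q i - q j))
    (h2 : norm3 (q' k - q' j) ≠ norm3 (q k - q j))
    (h3 : norm3 (q' k - q' i) ≠ norm3 (q k - q i)) :
    ∑ u, angleDG i j k ψ q q' u ⬝ᵥ (q' u - q u)
      = ψ (norm3 (q' i - q' j)) (norm3 (q' k - q' j)) (norm3 (q' k - q' i))
        - ψ (norm3 (q i - q j)) (norm3 (q k - q j)) (norm3 (q k - q i)) := by
  rw [Fintype.sum_eq_add_add i j k hij hik hjk fun u hi hj hk => by simp [angleDG, hi, hj, hk]]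
  simp only [angleDG, if_pos, if_neg hij.symm, if_neg hik.symm, if_neg hjk.symm]
  rw [dotProduct_triangle_eq_pairs, sub_sub_sub_comm, sub_sub_sub_comm _ (q k), sub_sub_sub_comm _ (q k),
    secant_dotProduct_sub _ _ h1, secant_dotProduct_sub _ _ h2, secant_dotProduct_sub _ _ h3,
    div_mul_cancel₀ _ (sub_ne_zero.mpr h1), div_mul_cancel₀ _ (sub_ne_zero.mpr h2),
    div_mul_cancel₀ _ (sub_ne_zero.mpr h3)]
  ring
end

section
/- For the angle discrete gradient G and any configurations q, q' with r'_{ji} ≠ r_{ji}, r'_{jk} ≠ r_{jk}, r'_{ik} ≠ r_{ik}, one has ∑_{u=1}^N (q'_u + q_u) × G_u(q,q') = 0, where × denotes the cross product in ℝ³; in particular G_i + G_j + G_k = 0. -/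
open scoped Matrix

/-! The angle discrete gradient is a superposition of three pair forces, one for each pair of the
triple, acting with opposite signs on the two particles of the pair and directed along the chord
`(q'_a + q_a) - (q'_b + q_b)`. A force pair `±w` on particles `a, b` contributes
`(A_a - A_b) × w` to `∑ u, A_u × G_u`, which vanishes for `A = q' + q` since `w` is parallel
to `A_a - A_b`. -/

section

variable {ι R : Type*} [Fintype ι] [CommRing R]

theorem sum_cross_add (A F G : ι → Fin 3 → R) :
    ∑ u, A u ⨯₃ (F + G) u = ∑ u, A u ⨯₃ F u + ∑ u, A u ⨯₃ G u := by
  simp only [Pi.add_apply, map_add, Finset.sum_add_distrib]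

end

section PairForce

variable {ι : Type*} [DecidableEq ι]

def pairForce {M : Type*} [AddCommGroup M] (a b : ι) (w : M) : ι → M :=
  Pi.single a w - Pi.single b w

variable [Fintype ι] {R : Type*} [CommRing R]

theorem sum_cross_pairForce (A : ι → Fin 3 → R) (a b : ι) (w : Fin 3 → R) :
    ∑ u, A u ⨯₃ pairForce a b w u = (A a - A b) ⨯₃ w := by
  simp only [pairForce, Pi.sub_apply, map_sub, Finset.sum_sub_distrib,
    Pi.apply_single (fun u => crossProduct (A u)) (fun u => map_zero _), Fintype.sum_pi_single',
    LinearMap.sub_apply]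

theorem sum_cross_pairForce_smul_sub (A : ι → Fin 3 → R) (a b : ι) (t : R) :
    ∑ u, A u ⨯₃ pairForce a b (t • (A a - A b)) u = 0 := by
  rw [sum_cross_pairForce, map_smul, cross_self, smul_zero]

end PairForce

theorem angleDG_eq_pairForce {N : ℕ} {i j k : Fin N} (hij : i ≠ j) (hik : i ≠ k) (hjk : j ≠ k)
    (ψ : ℝ → ℝ → ℝ → ℝ) (q q' : Fin N → Fin 3 → ℝ) :
    ∃ c₁ c₂ c₃ : ℝ, angleDG i j k ψ q q' =
      pairForce i j (c₁ • ((q' i + q i) - (q' j + q j))) +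
      pairForce k j (c₂ • ((q' k + q k) - (q' j + q j))) +
      pairForce k i (c₃ • ((q' k + q k) - (q' i + q i))) := by
  unfold angleDG
  extract_lets rji rjk rik rji' rjk' rik' Dji Djk Dik uji ujk uik
  refine ⟨Dji * (rji' + rji)⁻¹, Djk * (rjk' + rjk)⁻¹, Dik * (rik' + rik)⁻¹, funext fun u => ?_⟩
  have hchord : ∀ a b, (q' a - q' b) + (q a - q b) = (q' a + q a) - (q' b + q b) :=
    fun a b => by abel
  simp only [uji, ujk, uik, hchord, pairForce, Pi.add_apply, Pi.sub_apply, Pi.single_apply,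
    mul_smul]
  split_ifs <;> simp_all <;> abel

theorem angleDG_cross_sum_eq_zero_general {N : ℕ} (i j k : Fin N)
    (hij : i ≠ j) (hik : i ≠ k) (hjk : j ≠ k)
    (ψ : ℝ → ℝ → ℝ → ℝ) (q q' : Fin N → Fin 3 → ℝ) :
    (∑ u, (q' u + q u) ⨯₃ angleDG i j k ψ q q' u = 0) ∧
    angleDG i j k ψ q q' i + angleDG i j k ψ q q' j + angleDG i j k ψ q q' k = 0 := by
  obtain ⟨c₁, c₂, c₃, hG⟩ := angleDG_eq_pairForce hij hik hjk ψ q q'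
  rw [hG]
  constructor
  · rw [sum_cross_add, sum_cross_add]
    simp only [sum_cross_pairForce_smul_sub, add_zero]
  · simp only [pairForce, Pi.add_apply, Pi.sub_apply, Pi.single_eq_same,
      Pi.single_eq_of_ne, hij, hik, hjk, hij.symm, hik.symm, hjk.symm, ne_eq, not_false_eq_true,
      sub_zero, zero_sub, sub_self, add_zero, zero_add]
    abel

/-- For the angle discrete gradient `G` one has `∑ u, (q'_u + q_u) × G_u(q,q') = 0`;
in particular `G_i + G_j + G_k = 0`. -/
theorem angleDG_cross_sum_eq_zero {N : ℕ} (i j k : Fin N)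
    (hij : i ≠ j) (hik : i ≠ k) (hjk : j ≠ k)
    (ψ : ℝ → ℝ → ℝ → ℝ) (q q' : Fin N → Fin 3 → ℝ)
    (h1 : norm3 (q' i - q' j) ≠ norm3 (q i - q j))
    (h2 : norm3 (q' k - q' j) ≠ norm3 (q k - q j))
    (h3 : norm3 (q' k - q' i) ≠ norm3 (q k - q i)) :
    (∑ u, (q' u + q u) ⨯₃ angleDG i j k ψ q q' u = 0) ∧
    angleDG i j k ψ q q' i + angleDG i j k ψ q q' j + angleDG i j k ψ q q' k = 0 :=
  angleDG_cross_sum_eq_zero_general i j k hij hik hjk ψ q q'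
end
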